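/- Ultimate boundedness via scalar comparison: let ξ : [0,∞) → ℝ be differentiable satisfying ξ̇(t) ≤ -δ whenever ξ(t) ≥ B, and ξ̇(t) ≥ δ whenever ξ(t) ≤ -B, for some constants δ > 0, B ≥ 0, with |ξ̇(t)| ≤ Δ for all t. Then for every t ≥ T := max(|ξ(0)| - B, 0)/δ, it holds that |ξ(t)| ≤ B, and for all t ≥ 0, |ξ(t)| ≤ |ξ(0)| + Δt. -/

import Mathlib

open Set

/-!
While `ξ ≥ B` the function decreases at rate at least `δ`, so starting from `ξ 0` it must
reach `{ξ ≤ B}` within time `(ξ 0 - B) / δ`; once there it cannot leave, because at the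
boundary `ξ = B` the derivative is strictly negative. Applying this to `ξ` and to `-ξ` bounds
`|ξ|`. The linear growth bound is the mean value inequality for `|ξ'| ≤ Δ`.
-/

section

variable {ξ ξ' : ℝ → ℝ}

theorem le_const_of_hasDerivAt_neg_of_eq {s B : ℝ}
    (hder : ∀ t ≥ s, HasDerivAt ξ (ξ' t) t) (hneg : ∀ t ≥ s, ξ t = B → ξ' t < 0)
    (hs : ξ s ≤ B) : ∀ t ≥ s, ξ t ≤ B := fun _ hst =>
  image_le_of_deriv_right_lt_deriv_boundary
    (fun x hx => (hder x hx.1).continuousAt.continuousWithinAt)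
    (fun x hx => (hder x hx.1).hasDerivWithinAt) hs (fun _ => hasDerivAt_const _ B)
    (fun x hx => hneg x hx.1) ⟨hst, le_rfl⟩

theorem exists_le_of_hasDerivAt_le_neg {δ B t : ℝ} (ht : 0 ≤ t) (hreach : ξ 0 - B ≤ δ * t)
    (hder : ∀ x ≥ (0:ℝ), HasDerivAt ξ (ξ' x) x) (hup : ∀ x ≥ (0:ℝ), B ≤ ξ x → ξ' x ≤ -δ) :
    ∃ s ∈ Icc 0 t, ξ s ≤ B := by
  by_contra! habove
  have hdecay : ξ t ≤ ξ 0 - δ * t := by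
    refine image_le_of_deriv_right_le_deriv_boundary (B := fun x => ξ 0 - δ * x)
      (fun x hx => (hder x hx.1).continuousAt.continuousWithinAt)
      (fun x hx => (hder x hx.1).hasDerivWithinAt) (by simp) (by fun_prop)
      (fun x _ => ((hasDerivAt_id x).const_mul δ).const_sub (ξ 0) |>.hasDerivWithinAt)
      (fun x hx => ?_) ⟨ht, le_rfl⟩
    simpa using hup x hx.1 (habove x (Ico_subset_Icc_self hx)).le
  linarith [habove t ⟨ht, le_rfl⟩]

theorem le_of_max_sub_zero_div_le {δ B : ℝ} (hδ : 0 < δ)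
    (hder : ∀ t ≥ (0:ℝ), HasDerivAt ξ (ξ' t) t) (hup : ∀ t ≥ (0:ℝ), B ≤ ξ t → ξ' t ≤ -δ) :
    ∀ t ≥ max (ξ 0 - B) 0 / δ, ξ t ≤ B := by
  set T := max (ξ 0 - B) 0 / δ
  have hT0 : 0 ≤ T := div_nonneg (le_max_right _ _) hδ.le
  have hδT : δ * T = max (ξ 0 - B) 0 := mul_div_cancel₀ _ hδ.ne'
  obtain ⟨s, ⟨hs0, hsT⟩, hsB⟩ :=
    exists_le_of_hasDerivAt_le_neg hT0 (hδT ▸ le_max_left _ _) hder hup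
  have hneg : ∀ t ≥ s, ξ t = B → ξ' t < 0 := fun t hst hξ =>
    (hup t (hs0.trans hst) hξ.ge).trans_lt (neg_lt_zero.mpr hδ)
  exact fun t ht => le_const_of_hasDerivAt_neg_of_eq (fun x hx => hder x (hs0.trans hx)) hneg
    hsB t (hsT.trans ht)

theorem abs_le_abs_add_mul_of_abs_deriv_le {Δ : ℝ} (hder : ∀ t ≥ (0:ℝ), HasDerivAt ξ (ξ' t) t)
    (hbnd : ∀ t ≥ (0:ℝ), |ξ' t| ≤ Δ) : ∀ t ≥ (0:ℝ), |ξ t| ≤ |ξ 0| + Δ * t := by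
  intro t ht
  have hlip : |ξ t - ξ 0| ≤ Δ * (t - 0) :=
    norm_image_sub_le_of_norm_deriv_le_segment' (fun x hx => (hder x hx.1).hasDerivWithinAt)
      (fun x hx => hbnd x hx.1) t ⟨ht, le_rfl⟩
  calc |ξ t| = |ξ 0 + (ξ t - ξ 0)| := by rw [add_sub_cancel]
    _ ≤ |ξ 0| + Δ * t := by linarith [abs_add_le (ξ 0) (ξ t - ξ 0)]

end

theorem stmt_18_general (ξ ξ' : ℝ → ℝ) (δ B Δ : ℝ)
    (hδ : 0 < δ)
    (hder : ∀ t ≥ (0:ℝ), HasDerivAt ξ (ξ' t) t)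
    (hbnd : ∀ t ≥ (0:ℝ), |ξ' t| ≤ Δ)
    (hup : ∀ t ≥ (0:ℝ), B ≤ ξ t → ξ' t ≤ -δ)
    (hdown : ∀ t ≥ (0:ℝ), ξ t ≤ -B → δ ≤ ξ' t) :
    (∀ t ≥ max (|ξ 0| - B) 0 / δ, |ξ t| ≤ B) ∧
      ∀ t ≥ (0:ℝ), |ξ t| ≤ |ξ 0| + Δ * t := by
  refine ⟨fun t ht => abs_le.mpr ⟨?_, ?_⟩, abs_le_abs_add_mul_of_abs_deriv_le hder hbnd⟩
  · have hlow := le_of_max_sub_zero_div_le (ξ := fun x => -ξ x) (ξ' := fun x => -ξ' x) (B := B)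
      hδ (fun x hx => (hder x hx).neg) (fun x hx h => by linarith [hdown x hx (by linarith)]) t
      (le_trans (by gcongr; exact neg_le_abs (ξ 0)) ht)
    linarith
  · exact le_of_max_sub_zero_div_le hδ hder hup t
      (le_trans (by gcongr; exact le_abs_self (ξ 0)) ht)

theorem stmt_18 (ξ ξ' : ℝ → ℝ) (δ B Δ : ℝ)
    (hδ : 0 < δ) (hB : 0 ≤ B) (hΔ : 0 ≤ Δ)
    (hder : ∀ t ≥ (0:ℝ), HasDerivAt ξ (ξ' t) t)
    (hbnd : ∀ t ≥ (0:ℝ), |ξ' t| ≤ Δ)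
    (hup : ∀ t ≥ (0:ℝ), B ≤ ξ t → ξ' t ≤ -δ)
    (hdown : ∀ t ≥ (0:ℝ), ξ t ≤ -B → δ ≤ ξ' t) :
    (∀ t ≥ max (|ξ 0| - B) 0 / δ, |ξ t| ≤ B) ∧
      ∀ t ≥ (0:ℝ), |ξ t| ≤ |ξ 0| + Δ * t :=
  stmt_18_general ξ ξ' δ B Δ hδ hder hbnd hup hdown
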